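/- arXiv:2306.17369 — 5 statements merged into one kernel-verified Lean document; each statement's English description precedes it below -/
import Mathlib

section
/- (Key sieving lemma, core of Theorem 3.1.) Let I ⊆ {1,…,n}, ε ≥ 0, and x ∈ ℝⁿ with xⱼ = 0 for all j ∈ Ī. Suppose there exist δ, y ∈ ℝⁿ such that δⱼ = 0 for all j ∈ Ī, ‖δ‖ ≤ ε, yⱼ = 0 for all j ∈ I, and δ + y − ∇Φ(x) ∈ ∂P(x). If (R(x))ⱼ = 0 for every j ∈ Ī, then ‖R(x)‖ ≤ ε. -/
open scoped RealInnerProductSpace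

/-- key sieving lemma: let `I ⊆ [n]`, `ε ≥ 0`, and `x` with `xⱼ = 0` for
`j ∉ I`.  Suppose `δ, y` satisfy `δⱼ = 0` for `j ∉ I`, `‖δ‖ ≤ ε`, `yⱼ = 0` for `j ∈ I`,
and `δ + y - ∇Φ(x) ∈ ∂P(x)`.  If `(R(x))ⱼ = 0` for every `j ∉ I`, then `‖R(x)‖ ≤ ε`.
Here `R(x) = x - p` with `p = Prox_P(x - ∇Φ(x))`. -/
theorem sieving_lemma {n : ℕ}
    (Φ P : EuclideanSpace ℝ (Fin n) → ℝ)
    (gradΦ : EuclideanSpace ℝ (Fin n) → EuclideanSpace ℝ (Fin n))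
    (hΦconv : ConvexOn ℝ Set.univ Φ)
    (hΦgrad : ∀ x, HasGradientAt Φ (gradΦ x) x)
    (hPconv : ConvexOn ℝ Set.univ P)
    (I : Set (Fin n)) (ε : ℝ) (hε : 0 ≤ ε)
    (x δ y : EuclideanSpace ℝ (Fin n))
    (hx : ∀ j ∉ I, x j = 0)
    (hδ : ∀ j ∉ I, δ j = 0)
    (hδnorm : ‖δ‖ ≤ ε)
    (hy : ∀ j ∈ I, y j = 0)
    (hsub : ∀ z, P x + ⟪δ + y - gradΦ x, z - x⟫ ≤ P z)
    (p : EuclideanSpace ℝ (Fin n))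
    (hp : ∀ z, P p + (1/2) * ‖p - (x - gradΦ x)‖^2
            ≤ P z + (1/2) * ‖z - (x - gradΦ x)‖^2)
    (hR : ∀ j ∉ I, (x - p) j = 0) :
    ‖x - p‖ ≤ ε := by
  set u : EuclideanSpace ℝ (Fin n) := x - gradΦ x with hu
  set r : EuclideanSpace ℝ (Fin n) := x - p with hr
  -- Step 1: for all small t, ⟪u - p, r⟫ ≤ P x - P p + t * ((1/2)*‖r‖^2)
  have key : ∀ t : ℝ, 0 < t → t ≤ 1 →
      ⟪u - p, r⟫ ≤ P x - P p + t * ((1/2) * ‖r‖^2) := by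
    intro t ht ht1
    have hz := hp (p + t • r)
    have hconv := hPconv.2 (Set.mem_univ p) (Set.mem_univ x)
      (by linarith : (0:ℝ) ≤ 1 - t) (le_of_lt ht) (by ring)
    have hzeq : (1 - t) • p + t • x = p + t • r := by
      rw [hr]; module
    rw [hzeq] at hconv
    simp only [smul_eq_mul] at hconv
    have hnorm : ‖p + t • r - u‖^2
        = ‖p - u‖^2 + 2 * (t * ⟪p - u, r⟫) + t^2 * ‖r‖^2 := by
      have : p + t • r - u = (p - u) + t • r := by abel
      rw [this, norm_add_sq_real, real_inner_smul_right, norm_smul]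
      simp [mul_pow, abs_of_pos ht]
      try ring
    rw [hnorm] at hz
    have hinner : ⟪u - p, r⟫ = -⟪p - u, r⟫ := by
      rw [← inner_neg_left]; congr 1; abel
    have h2 : P p + (1/2) * ‖p - u‖^2 ≤ (1 - t) * P p + t * P x
        + (1/2) * (‖p - u‖^2 + 2 * (t * ⟪p - u, r⟫) + t^2 * ‖r‖^2) :=
      le_trans hz (by linarith [hconv])
    rw [hinner]
    have ht' := ht.le
    nlinarith [sq_nonneg t, mul_pos ht ht]
  -- Step 2: limit t → 0
  have hA : ⟪u - p, r⟫ ≤ P x - P p := by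
    apply le_of_forall_pos_le_add
    intro e he
    set C : ℝ := (1/2) * ‖r‖^2 with hC
    have hC0 : 0 ≤ C := by positivity
    have ht : (0:ℝ) < min 1 (e / (C + 1)) := by
      apply lt_min one_pos; positivity
    have := key (min 1 (e / (C + 1))) ht (min_le_left _ _)
    have hle : min 1 (e / (C + 1)) * C ≤ e := by
      have h1 : min 1 (e / (C + 1)) ≤ e / (C + 1) := min_le_right _ _
      have h2 : min 1 (e / (C + 1)) * C ≤ (e / (C + 1)) * C :=
        mul_le_mul_of_nonneg_right h1 hC0
      have h3 : (e / (C + 1)) * C ≤ e := by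
        rw [div_mul_eq_mul_div, div_le_iff₀ (by linarith)]
        nlinarith
      linarith
    linarith
  -- Step 3: combine with hsub at p
  have hB := hsub p
  have hpx : (p : EuclideanSpace ℝ (Fin n)) - x = -r := by rw [hr]; abel
  rw [hpx, inner_neg_right] at hB
  -- ⟪u - p, r⟫ = ‖r‖^2 - ⟪gradΦ x, r⟫
  have hup : u - p = r - gradΦ x := by rw [hu, hr]; abel
  have h1 : ⟪u - p, r⟫ = ‖r‖^2 - ⟪gradΦ x, r⟫ := by
    rw [hup, inner_sub_left, real_inner_self_eq_norm_sq]
  have h2 : ⟪δ + y - gradΦ x, r⟫ = ⟪δ, r⟫ + ⟪y, r⟫ - ⟪gradΦ x, r⟫ := by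
    rw [inner_sub_left, inner_add_left]
  have hyr : ⟪y, r⟫ = 0 := by
    rw [PiLp.inner_apply]
    apply Finset.sum_eq_zero
    intro j _
    by_cases hj : j ∈ I
    · simp [hy j hj]
    · simp [hR j hj]
  have hmain : ‖r‖^2 ≤ ε * ‖r‖ := by
    have h3 : ⟪δ, r⟫ ≤ ‖δ‖ * ‖r‖ := real_inner_le_norm δ r
    have h4 : ‖δ‖ * ‖r‖ ≤ ε * ‖r‖ :=
      mul_le_mul_of_nonneg_right hδnorm (norm_nonneg r)
    rw [h1] at hA
    rw [h2, hyr] at hB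
    linarith
  by_cases h0 : ‖r‖ = 0
  · rw [h0]; exact hε
  · have : 0 < ‖r‖ := lt_of_le_of_ne (norm_nonneg r) (Ne.symm h0)
    nlinarith
end

section
/- (Basis of safe screening for Lasso.) Suppose x* ∈ ℝⁿ minimizes (1/2)‖Ax − b‖² + λ‖x‖₁ over ℝⁿ, and set θ* := b − Ax*. If |⟨aᵢ, θ*⟩| < λ for some index i, then x*ᵢ = 0. -/
open scoped RealInnerProductSpace

set_option maxHeartbeats 1000000 in
/-- basis of safe screening for Lasso: if `x*` minimizes
`(1/2)‖Ax - b‖² + λ‖x‖₁` and `θ* = b - Ax*`, then `|⟨aᵢ, θ*⟩| < λ` implies `x*ᵢ = 0`. -/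
theorem lasso_safe_screening_basis {m n : ℕ}
    (a : Fin n → EuclideanSpace ℝ (Fin m)) (b : EuclideanSpace ℝ (Fin m))
    (lam : ℝ) (hlam : 0 < lam)
    (xs : Fin n → ℝ)
    (hmin : ∀ x : Fin n → ℝ,
      (1/2) * ‖(∑ i, xs i • a i) - b‖^2 + lam * ∑ i, |xs i|
        ≤ (1/2) * ‖(∑ i, x i • a i) - b‖^2 + lam * ∑ i, |x i|)
    (i : Fin n)
    (hscreen : |⟪a i, b - ∑ j, xs j • a j⟫| < lam) :
    xs i = 0 := by
  by_contra hxi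
  set S := ∑ j, xs j • a j with hS
  set c : ℝ := ⟪a i, b - S⟫ with hc
  have hca : |c| < lam := hscreen
  set ε : ℝ := min |xs i| ((lam - |c|) / (‖a i‖^2 + 1)) with hε
  have hxipos : 0 < |xs i| := abs_pos.mpr hxi
  have hden : (0:ℝ) < ‖a i‖^2 + 1 := by positivity
  have hεpos : 0 < ε := lt_min hxipos (div_pos (by linarith) hden)
  have hεle1 : ε ≤ |xs i| := min_le_left _ _
  have hεle2 : ε ≤ (lam - |c|) / (‖a i‖^2 + 1) := min_le_right _ _
  have hεmul : ε * (‖a i‖^2 + 1) ≤ lam - |c| := by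
    rw [← le_div_iff₀ hden]; exact hεle2
  set t : ℝ := if 0 < xs i then -ε else ε with ht
  have habs : |xs i + t| = |xs i| - ε := by
    rcases lt_trichotomy (xs i) 0 with h | h | h
    · have h1 : xs i + ε ≤ 0 := by
        have := hεle1; rw [abs_of_neg h] at this; linarith
      rw [ht, if_neg (not_lt.mpr h.le), abs_of_nonpos h1, abs_of_neg h]; ring
    · exact absurd h hxi
    · have h1 : 0 ≤ xs i - ε := by
        have := hεle1; rw [abs_of_pos h] at this; linarith
      rw [ht, if_pos h]
      rw [show xs i + -ε = xs i - ε by ring, abs_of_nonneg h1, abs_of_pos h]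
  have ht2 : t^2 = ε^2 := by
    rcases le_or_gt (xs i) 0 with h | h
    · rw [ht, if_neg (not_lt.mpr h)]
    · rw [ht, if_pos h]; ring
  have htc : -(t*c) ≤ ε * |c| := by
    rcases le_or_gt (xs i) 0 with h | h
    · rw [ht, if_neg (not_lt.mpr h)]
      have : -c ≤ |c| := neg_le_abs c
      nlinarith
    · rw [ht, if_pos h]
      have : c ≤ |c| := le_abs_self c
      nlinarith
  set x : Fin n → ℝ := fun j => xs j + if j = i then t else 0 with hx
  have hsum : ∑ j, x j • a j = S + t • a i := by
    simp only [hx, add_smul, ite_smul, zero_smul]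
    rw [Finset.sum_add_distrib, Finset.sum_ite_eq' Finset.univ i (fun j => t • a j)]
    simp [hS]
  have habssum : ∑ j, |x j| = (∑ j, |xs j|) - ε := by
    have key : ∀ j, |x j| = |xs j| + (if j = i then |xs i + t| - |xs i| else 0) := by
      intro j
      by_cases h : j = i
      · subst h; simp [hx]
      · simp [hx, h]
    rw [Finset.sum_congr rfl (fun j _ => key j), Finset.sum_add_distrib,
      Finset.sum_ite_eq' Finset.univ i (fun _ => |xs i + t| - |xs i|)]
    simp [habs]; ring
  have hinner : ⟪S - b, a i⟫ = -c := by
    rw [hc, real_inner_comm]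
    rw [show b - S = -(S - b) by abel, inner_neg_right, neg_neg]
  have hnorm : ‖(S + t • a i) - b‖^2 = ‖S - b‖^2 - 2*t*c + t^2 * ‖a i‖^2 := by
    have h1 : (S + t • a i) - b = (S - b) + t • a i := by abel
    rw [h1, norm_add_sq_real, real_inner_smul_right, hinner, norm_smul,
      Real.norm_eq_abs, mul_pow, sq_abs]
    ring
  have hkey := hmin x
  rw [hsum, habssum, hnorm] at hkey
  have hmain : 0 ≤ -(t*c) + t^2/2 * ‖a i‖^2 - lam * ε := by nlinarith
  rw [ht2] at hmain
  nlinarith [sq_nonneg (‖a i‖), hεpos, htc, hca, hεmul]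
end

section
/- (Safe region screening rule.) Suppose x* ∈ ℝⁿ minimizes (1/2)‖Ax − b‖² + λ‖x‖₁ over ℝⁿ. Let Θ ⊆ ℝᵐ be any set containing θ* := b − Ax*. If sup_{θ∈Θ} |⟨aᵢ, θ⟩| < λ for some index i, then x*ᵢ = 0. -/
open scoped RealInnerProductSpace

/-- safe region screening rule: if `x*` minimizes
`(1/2)‖Ax - b‖² + λ‖x‖₁`, `Θ` contains `θ* = b - Ax*`, and
`sup_{θ∈Θ} |⟨aᵢ, θ⟩| < λ` (expressed as: there is `c < λ` bounding `|⟨aᵢ, θ⟩|` over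
`Θ`), then `x*ᵢ = 0`. -/
theorem lasso_safe_region_screening {m n : ℕ}
    (a : Fin n → EuclideanSpace ℝ (Fin m)) (b : EuclideanSpace ℝ (Fin m))
    (lam : ℝ) (hlam : 0 < lam)
    (xs : Fin n → ℝ)
    (hmin : ∀ x : Fin n → ℝ,
      (1/2) * ‖(∑ i, xs i • a i) - b‖^2 + lam * ∑ i, |xs i|
        ≤ (1/2) * ‖(∑ i, x i • a i) - b‖^2 + lam * ∑ i, |x i|)
    (Θ : Set (EuclideanSpace ℝ (Fin m)))
    (hθ : (b - ∑ j, xs j • a j) ∈ Θ)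
    (i : Fin n)
    (hscreen : ∃ c < lam, ∀ θ ∈ Θ, |⟪a i, θ⟫| ≤ c) :
    xs i = 0 := by
  obtain ⟨c, hclam, hbound⟩ := hscreen
  set θ : EuclideanSpace ℝ (Fin m) := b - ∑ j, xs j • a j with hθdef
  have hcθ : |⟪a i, θ⟫| ≤ c := hbound _ hθ
  by_contra hne
  set s : ℝ := min |xs i| ((lam - c) / (‖a i‖ ^ 2 + 1)) with hsdef
  have hapos : (0:ℝ) < ‖a i‖ ^ 2 + 1 := by positivity
  have hs0 : 0 < s :=
    lt_min (abs_pos.2 hne) (div_pos (sub_pos.2 hclam) hapos)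
  have hsle : s ≤ |xs i| := min_le_left _ _
  have hsle2 : s ≤ (lam - c) / (‖a i‖ ^ 2 + 1) := min_le_right _ _
  have key : ∃ t : ℝ, |t| = s ∧ |xs i - t| = |xs i| - s := by
    rcases lt_or_gt_of_ne hne with h | h
    · refine ⟨-s, by rw [abs_neg]; exact abs_of_pos hs0, ?_⟩
      have habs : |xs i| = -xs i := abs_of_neg h
      rw [sub_neg_eq_add, abs_of_nonpos (by linarith), habs]; ring
    · refine ⟨s, abs_of_pos hs0, ?_⟩
      have habs : |xs i| = xs i := abs_of_pos h
      rw [abs_of_nonneg (by linarith), habs]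
  obtain ⟨t, ht1, ht2⟩ := key
  set x : Fin n → ℝ := fun j => xs j - if j = i then t else 0 with hxdef
  have hsum : ∑ j, x j • a j = (∑ j, xs j • a j) - t • a i := by
    simp only [hxdef, sub_smul, ite_smul, zero_smul]
    rw [Finset.sum_sub_distrib]
    simp
  have habs : ∑ j, |x j| = (∑ j, |xs j|) - s := by
    have : ∀ j ∈ Finset.univ, |x j| = |xs j| - (if j = i then s else 0) := by
      intro j _
      by_cases hj : j = i
      · subst hj; simp [hxdef, ht2]
      · simp [hxdef, hj]
    rw [Finset.sum_congr rfl this, Finset.sum_sub_distrib]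
    simp
  have hnorm : ‖(∑ j, x j • a j) - b‖ ^ 2
      = ‖(∑ j, xs j • a j) - b‖ ^ 2 + 2 * t * ⟪a i, θ⟫ + t ^ 2 * ‖a i‖ ^ 2 := by
    rw [hsum]
    have heq : (∑ j, xs j • a j) - t • a i - b = ((∑ j, xs j • a j) - b) - t • a i := by
      abel
    rw [heq, norm_sub_sq_real]
    have h1 : ⟪(∑ j, xs j • a j) - b, t • a i⟫ = -(t * ⟪a i, θ⟫) := by
      rw [real_inner_smul_right, real_inner_comm]
      have : ⟪a i, (∑ j, xs j • a j) - b⟫ = -⟪a i, θ⟫ := by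
        rw [hθdef, ← inner_neg_right]; congr 1; abel
      rw [this]; ring
    rw [h1, norm_smul]
    simp [abs_mul, mul_pow, sq_abs]
    ring
  have hm := hmin x
  rw [hnorm, habs] at hm
  have hineq : lam * s ≤ t * ⟪a i, θ⟫ + t ^ 2 / 2 * ‖a i‖ ^ 2 := by nlinarith
  have h2 : t * ⟪a i, θ⟫ ≤ s * c := by
    calc t * ⟪a i, θ⟫ ≤ |t * ⟪a i, θ⟫| := le_abs_self _
    _ = s * |⟪a i, θ⟫| := by rw [abs_mul, ht1]
    _ ≤ s * c := by
        exact mul_le_mul_of_nonneg_left hcθ hs0.le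
  have ht2' : t ^ 2 = s ^ 2 := by rw [← sq_abs, ht1]
  have hs2 : s * (‖a i‖ ^ 2 + 1) ≤ lam - c := by
    rw [← le_div_iff₀ hapos]; exact hsle2
  nlinarith [sq_nonneg (‖a i‖), hs0]
end

section
/- (Lasso dual optimum is a projection onto a polytope.) Suppose x* ∈ ℝⁿ minimizes (1/2)‖Ax − b‖² + λ‖x‖₁ over ℝⁿ, and set θ* := b − Ax*. Let C := {θ ∈ ℝᵐ : |⟨aᵢ, θ⟩| ≤ λ for all i = 1,…,n}. Then θ* ∈ C and ‖θ* − b‖ ≤ ‖θ − b‖ for all θ ∈ C; that is, θ* is the Euclidean projection of b onto C, equivalently θ* maximizes (1/2)‖b‖² − (1/2)‖θ − b‖² over C. -/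
open scoped RealInnerProductSpace

lemma deriv_bound {E : Type*} [NormedAddCommGroup E] [InnerProductSpace ℝ E]
    (S b v : E) (lam d : ℝ)
    (h : ∀ t : ℝ, 0 < t → t < 1 →
      (1/2) * ‖S - b‖^2 ≤ (1/2) * ‖(S + t • v) - b‖^2 + lam * d * t) :
    ⟪v, b - S⟫ ≤ lam * d := by
  have key : ∀ t : ℝ, 0 < t → t < 1 → ⟪v, b - S⟫ ≤ t/2 * ‖v‖^2 + lam * d := by
    intro t ht ht1
    have h2 := h t ht ht1
    have hexp : ‖(S + t • v) - b‖^2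
        = ‖S - b‖^2 + 2 * (t * ⟪S - b, v⟫) + t^2 * ‖v‖^2 := by
      have : (S + t • v) - b = (S - b) + t • v := by abel
      rw [this, norm_add_sq_real, real_inner_smul_right, norm_smul]
      simp [mul_pow, abs_of_pos ht]
    have hiv : ⟪S - b, v⟫ = - ⟪v, b - S⟫ := by
      rw [real_inner_comm, ← inner_neg_right]
      congr 1; abel
    rw [hexp, hiv] at h2
    nlinarith [sq_nonneg t]
  refine le_of_forall_pos_le_add fun ε hε => ?_
  set t := min (ε / (‖v‖^2 + 1)) (1/2) with htdef
  have hvpos : (0:ℝ) < ‖v‖^2 + 1 := by positivity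
  have ht : 0 < t := lt_min (by positivity) (by norm_num)
  have ht1 : t < 1 := lt_of_le_of_lt (min_le_right _ _) (by norm_num)
  have := key t ht ht1
  have htle : t ≤ ε / (‖v‖^2 + 1) := min_le_left _ _
  have : t/2 * ‖v‖^2 ≤ ε := by
    have h1 : t * ‖v‖^2 ≤ (ε / (‖v‖^2 + 1)) * (‖v‖^2 + 1) := by
      have := sq_nonneg ‖v‖
      nlinarith
    rw [div_mul_cancel₀ _ (ne_of_gt hvpos)] at h1
    linarith
  linarith [key t ht ht1]


/-- Lasso dual optimum is a projection onto a polytope: if `x*`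
minimizes `(1/2)‖Ax - b‖² + λ‖x‖₁` and `θ* = b - Ax*`, then `θ*` lies in
`C = {θ : |⟨aᵢ, θ⟩| ≤ λ ∀ i}` and is the Euclidean projection of `b` onto `C`,
equivalently it maximizes `(1/2)‖b‖² - (1/2)‖θ - b‖²` over `C`. -/
theorem lasso_dual_projection {m n : ℕ}
    (a : Fin n → EuclideanSpace ℝ (Fin m)) (b : EuclideanSpace ℝ (Fin m))
    (lam : ℝ) (hlam : 0 < lam)
    (xs : Fin n → ℝ)
    (hmin : ∀ x : Fin n → ℝ,
      (1/2) * ‖(∑ i, xs i • a i) - b‖^2 + lam * ∑ i, |xs i|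
        ≤ (1/2) * ‖(∑ i, x i • a i) - b‖^2 + lam * ∑ i, |x i|) :
    (∀ i : Fin n, |⟪a i, b - ∑ j, xs j • a j⟫| ≤ lam) ∧
    (∀ θ : EuclideanSpace ℝ (Fin m), (∀ i : Fin n, |⟪a i, θ⟫| ≤ lam) →
      ‖(b - ∑ j, xs j • a j) - b‖ ≤ ‖θ - b‖) ∧
    (∀ θ : EuclideanSpace ℝ (Fin m), (∀ i : Fin n, |⟪a i, θ⟫| ≤ lam) →
      (1/2) * ‖b‖^2 - (1/2) * ‖θ - b‖^2
        ≤ (1/2) * ‖b‖^2 - (1/2) * ‖(b - ∑ j, xs j • a j) - b‖^2) := by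
  set S : EuclideanSpace ℝ (Fin m) := ∑ j, xs j • a j with hS
  set L : ℝ := ∑ i, |xs i| with hL
  -- coordinate perturbations
  have coord : ∀ (i : Fin n) (s : ℝ), s = 1 ∨ s = -1 →
      ⟪s • a i, b - S⟫ ≤ lam * 1 := by
    intro i s hs
    apply deriv_bound
    intro t ht ht1
    have habs : |s| = 1 := by rcases hs with h | h <;> simp [h]
    have hx := hmin (fun j => xs j + (if j = i then t * s else 0))
    have hsum : (∑ j, (xs j + (if j = i then t * s else 0)) • a j)
        = S + t • (s • a i) := by
      rw [hS, smul_smul]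
      simp only [add_smul, Finset.sum_add_distrib, ite_smul, zero_smul,
        Finset.sum_ite_eq', Finset.mem_univ, if_true]
    have habsum : (∑ j, |xs j + (if j = i then t * s else 0)|)
        ≤ L + t := by
      rw [hL]
      have hterm : ∀ j, |xs j + (if j = i then t * s else 0)|
          = |xs j| + (if j = i then |xs i + t * s| - |xs i| else 0) := by
        intro j
        by_cases h : j = i
        · simp [h]
        · simp [h]
      have hsplit : (∑ j, |xs j + (if j = i then t * s else 0)|)
          = (∑ j, |xs j|) + (|xs i + t * s| - |xs i|) := by
        rw [Finset.sum_congr rfl fun j _ => hterm j, Finset.sum_add_distrib,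
          Finset.sum_ite_eq', if_pos (Finset.mem_univ i)]
      have htri : |xs i + t * s| - |xs i| ≤ t := by
        have h2 : |xs i + t * s| ≤ |xs i| + |t * s| := abs_add_le _ _
        rw [abs_mul, habs, abs_of_pos ht] at h2
        linarith
      linarith
    rw [hsum] at hx
    have hlt : lam * (∑ j, |xs j + (if j = i then t * s else 0)|) ≤ lam * (L + t) :=
      mul_le_mul_of_nonneg_left habsum (le_of_lt hlam)
    calc (1/2) * ‖S - b‖^2 ≤ (1/2) * ‖(S + t • s • a i) - b‖^2 + lam * (L + t) - lam * L := by
          linarith [hx, hlt]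
      _ = (1/2) * ‖(S + t • s • a i) - b‖^2 + lam * 1 * t := by ring
  have part1 : ∀ i : Fin n, |⟪a i, b - S⟫| ≤ lam := by
    intro i
    have h1 := coord i 1 (Or.inl rfl)
    rw [real_inner_smul_left, one_mul, mul_one] at h1
    have h2 := coord i (-1) (Or.inr rfl)
    rw [real_inner_smul_left, neg_one_mul, mul_one] at h2
    exact abs_le.mpr ⟨by linarith, h1⟩
  -- scaling perturbation
  have scale : lam * L ≤ ⟪S, b - S⟫ := by
    have h := deriv_bound S b (-S) lam (-L) ?_
    · rw [inner_neg_left] at h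
      linarith
    intro t ht ht1
    have hx := hmin (fun j => (1 - t) * xs j)
    have hsum : (∑ j, ((1 - t) * xs j) • a j) = S + t • (-S) := by
      have hterm : ∀ j, ((1 - t) * xs j) • a j = (1 - t) • (xs j • a j) :=
        fun j => mul_smul _ _ _
      rw [Finset.sum_congr rfl fun j _ => hterm j, ← Finset.smul_sum, sub_smul,
        one_smul, hS, smul_neg, ← sub_eq_add_neg]
    have habsum : (∑ j, |(1 - t) * xs j|) = (1 - t) * L := by
      rw [hL, Finset.mul_sum]
      refine Finset.sum_congr rfl fun j _ => ?_
      rw [abs_mul, abs_of_pos (by linarith : (0:ℝ) < 1 - t)]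
    rw [hsum, habsum] at hx
    calc (1/2) * ‖S - b‖^2
        ≤ (1/2) * ‖(S + t • (-S)) - b‖^2 + lam * ((1-t) * L) - lam * L := by linarith
      _ = (1/2) * ‖(S + t • (-S)) - b‖^2 + lam * (-L) * t := by ring
  -- key projection inequality
  have proj : ∀ θ : EuclideanSpace ℝ (Fin m), (∀ i : Fin n, |⟪a i, θ⟫| ≤ lam) →
      ‖(b - S) - b‖^2 ≤ ‖θ - b‖^2 := by
    intro θ hθ
    have hSθ : ⟪S, θ⟫ ≤ lam * L := by
      rw [hS, sum_inner, hL, Finset.mul_sum]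
      refine Finset.sum_le_sum fun i _ => ?_
      rw [real_inner_smul_left]
      calc xs i * ⟪a i, θ⟫ ≤ |xs i * ⟪a i, θ⟫| := le_abs_self _
        _ = |xs i| * |⟪a i, θ⟫| := abs_mul _ _
        _ ≤ |xs i| * lam := mul_le_mul_of_nonneg_left (hθ i) (abs_nonneg _)
        _ = lam * |xs i| := mul_comm _ _
    have hkey : ⟪θ - (b - S), S⟫ ≤ 0 := by
      rw [inner_sub_left]
      have e1 : ⟪θ, S⟫ = ⟪S, θ⟫ := real_inner_comm _ _
      have e2 : ⟪b - S, S⟫ = ⟪S, b - S⟫ := real_inner_comm _ _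
      rw [e1, e2]
      linarith
    have hdecomp : θ - b = (θ - (b - S)) + (-S) := by abel
    have : ‖θ - b‖^2 = ‖θ - (b - S)‖^2 + 2 * ⟪θ - (b - S), -S⟫ + ‖S‖^2 := by
      rw [hdecomp, norm_add_sq_real, norm_neg]
    rw [inner_neg_right] at this
    have hbs : ‖(b - S) - b‖^2 = ‖S‖^2 := by
      have : (b - S) - b = -S := by abel
      rw [this, norm_neg]
    rw [hbs]
    nlinarith [sq_nonneg ‖θ - (b - S)‖]
  refine ⟨part1, fun θ hθ => ?_, fun θ hθ => ?_⟩
  · have := proj θ hθ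
    have h1 : (0:ℝ) ≤ ‖(b - S) - b‖ := norm_nonneg _
    have h2 : (0:ℝ) ≤ ‖θ - b‖ := norm_nonneg _
    nlinarith
  · have := proj θ hθ
    linarith
end

section
/- (Validity of the strong screening rule under the unit-slope bound.) Let λ̃ > λ > λ̃/2 > 0. For μ ∈ {λ, λ̃}, let x*(μ) be a minimizer of (1/2)‖Ax − b‖² + μ‖x‖₁ over ℝⁿ and set θ*(μ) := b − Ax*(μ). Fix an index i and assume the unit-slope bound |⟨aᵢ, θ*(λ)⟩ − ⟨aᵢ, θ*(λ̃)⟩| ≤ λ̃ − λ. If |⟨aᵢ, θ*(λ̃)⟩| < 2λ − λ̃, then |⟨aᵢ, θ*(λ)⟩| < λ and hence x*(λ)ᵢ = 0. -/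
open scoped RealInnerProductSpace

/-!
By the triangle inequality and the unit-slope bound,
`|⟨aᵢ, θ*(λ)⟩| ≤ (λ̃ - λ) + |⟨aᵢ, θ*(λ̃)⟩| < (λ̃ - λ) + (2λ - λ̃) = λ`.
If `x*(λ)ᵢ ≠ 0`, the Lasso objective restricted to the `i`-th coordinate line through `x*(λ)`
is differentiable at its minimum `x*(λ)ᵢ`, and Fermat's rule gives
`⟨aᵢ, θ*(λ)⟩ = λ · sign x*(λ)ᵢ`, whose absolute value is `λ`; hence `x*(λ)ᵢ = 0`.
-/

open Finset Function

noncomputable def lassoObjective {ι E : Type*} [Fintype ι] [NormedAddCommGroup E]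
    [NormedSpace ℝ E] (a : ι → E) (b : E) (μ : ℝ) (x : ι → ℝ) : ℝ :=
  (1/2) * ‖(∑ i, x i • a i) - b‖^2 + μ * ∑ i, |x i|

section
variable {ι : Type*} [Fintype ι] [DecidableEq ι]

theorem sum_apply_update {α M : Type*} [AddCommMonoid M] (f : ι → α → M)
    (x : ι → α) (i : ι) (s : α) :
    ∑ j, f j (update x i s j) = f i s + ∑ j ∈ univ \ {i}, f j (x j) := by
  simp_rw [apply_update f]
  exact sum_update_of_mem (mem_univ i) _ _

theorem hasDerivAt_sum_update_smul {E : Type*} [NormedAddCommGroup E] [NormedSpace ℝ E]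
    (a : ι → E) (x : ι → ℝ) (i : ι) (s : ℝ) :
    HasDerivAt (fun s => ∑ j, update x i s j • a j) (a i) s := by
  simp_rw [sum_apply_update (fun j c => c • a j)]
  simpa using (hasDerivAt_id s).smul_const (a i)

theorem hasDerivAt_sum_abs_update (x : ι → ℝ) (i : ι) {s : ℝ} (hs : s ≠ 0) :
    HasDerivAt (fun s => ∑ j, |update x i s j|) (SignType.sign s) s := by
  simp_rw [sum_apply_update (fun _ c => |c|)]
  exact (hasDerivAt_abs hs).add_const _

variable {E : Type*} [NormedAddCommGroup E] [InnerProductSpace ℝ E]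

theorem hasDerivAt_lassoObjective_update (a : ι → E) (b : E) (μ : ℝ) (x : ι → ℝ) {i : ι}
    (hx : x i ≠ 0) :
    HasDerivAt (fun s => lassoObjective a b μ (update x i s))
      (⟪(∑ j, x j • a j) - b, a i⟫ + μ * SignType.sign (x i)) (x i) := by
  have hres := ((hasDerivAt_sum_update_smul a x i (x i)).sub_const b).norm_sq
  have := (hres.const_mul (1/2)).add ((hasDerivAt_sum_abs_update x i hx).const_mul μ)
  simp only [update_eq_self] at this
  exact this.congr_deriv (by ring)

theorem IsMinOn.inner_residual_eq_of_ne_zero {a : ι → E} {b : E} {μ : ℝ} {x : ι → ℝ}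
    (hmin : IsMinOn (lassoObjective a b μ) Set.univ x) {i : ι} (hx : x i ≠ 0) :
    ⟪a i, b - ∑ j, x j • a j⟫ = μ * SignType.sign (x i) := by
  have hloc : IsLocalMin (fun s => lassoObjective a b μ (update x i s)) (x i) :=
    Filter.Eventually.of_forall fun s => by
      simpa only [update_eq_self] using isMinOn_univ_iff.mp hmin (update x i s)
  have hderiv := hloc.hasDerivAt_eq_zero (hasDerivAt_lassoObjective_update a b μ x hx)
  rw [← neg_sub, inner_neg_right, real_inner_comm]
  linarith

theorem IsMinOn.eq_zero_of_abs_inner_residual_lt {a : ι → E} {b : E} {μ : ℝ} {x : ι → ℝ}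
    (hmin : IsMinOn (lassoObjective a b μ) Set.univ x) {i : ι}
    (h : |⟪a i, b - ∑ j, x j • a j⟫| < μ) : x i = 0 := by
  by_contra hx
  have habs : |μ * SignType.sign (x i)| = |μ| := by
    rcases lt_or_gt_of_ne hx with hneg | hpos
    · simp [sign_neg hneg]
    · simp [sign_pos hpos]
  rw [hmin.inner_residual_eq_of_ne_zero hx, habs] at h
  linarith [le_abs_self μ]

end

theorem lasso_strong_screening_rule_general {m n : ℕ}
    (a : Fin n → EuclideanSpace ℝ (Fin m)) (b : EuclideanSpace ℝ (Fin m))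
    (lam lamt : ℝ)
    (xlam xlamt : Fin n → ℝ)
    (hminlam : ∀ x : Fin n → ℝ,
      (1/2) * ‖(∑ i, xlam i • a i) - b‖^2 + lam * ∑ i, |xlam i|
        ≤ (1/2) * ‖(∑ i, x i • a i) - b‖^2 + lam * ∑ i, |x i|)
    (i : Fin n)
    (hslope : |⟪a i, b - ∑ j, xlam j • a j⟫ - ⟪a i, b - ∑ j, xlamt j • a j⟫|
                ≤ lamt - lam)
    (hscreen : |⟪a i, b - ∑ j, xlamt j • a j⟫| < 2 * lam - lamt) :
    |⟪a i, b - ∑ j, xlam j • a j⟫| < lam ∧ xlam i = 0 := by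
  have hlt : |⟪a i, b - ∑ j, xlam j • a j⟫| < lam := by
    have := abs_sub_abs_le_abs_sub ⟪a i, b - ∑ j, xlam j • a j⟫ ⟪a i, b - ∑ j, xlamt j • a j⟫
    linarith
  exact ⟨hlt, (isMinOn_univ_iff.mpr hminlam).eq_zero_of_abs_inner_residual_lt hlt⟩

/-- validity of the strong screening rule under the unit-slope bound:
let `λ̃ > λ > λ̃/2 > 0`, let `x*(λ)` and `x*(λ̃)` be Lasso minimizers with parameters
`λ` and `λ̃`, and set `θ*(μ) = b - Ax*(μ)`. If the unit-slope bound
`|⟨aᵢ, θ*(λ)⟩ - ⟨aᵢ, θ*(λ̃)⟩| ≤ λ̃ - λ` holds and `|⟨aᵢ, θ*(λ̃)⟩| < 2λ - λ̃`, then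
`|⟨aᵢ, θ*(λ)⟩| < λ` and `x*(λ)ᵢ = 0`. -/
theorem lasso_strong_screening_rule {m n : ℕ}
    (a : Fin n → EuclideanSpace ℝ (Fin m)) (b : EuclideanSpace ℝ (Fin m))
    (lam lamt : ℝ) (h1 : lam < lamt) (h2 : lamt / 2 < lam) (h3 : 0 < lamt / 2)
    (xlam xlamt : Fin n → ℝ)
    (hminlam : ∀ x : Fin n → ℝ,
      (1/2) * ‖(∑ i, xlam i • a i) - b‖^2 + lam * ∑ i, |xlam i|
        ≤ (1/2) * ‖(∑ i, x i • a i) - b‖^2 + lam * ∑ i, |x i|)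
    (hminlamt : ∀ x : Fin n → ℝ,
      (1/2) * ‖(∑ i, xlamt i • a i) - b‖^2 + lamt * ∑ i, |xlamt i|
        ≤ (1/2) * ‖(∑ i, x i • a i) - b‖^2 + lamt * ∑ i, |x i|)
    (i : Fin n)
    (hslope : |⟪a i, b - ∑ j, xlam j • a j⟫ - ⟪a i, b - ∑ j, xlamt j • a j⟫|
                ≤ lamt - lam)
    (hscreen : |⟪a i, b - ∑ j, xlamt j • a j⟫| < 2 * lam - lamt) :
    |⟪a i, b - ∑ j, xlam j • a j⟫| < lam ∧ xlam i = 0 :=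
  lasso_strong_screening_rule_general a b lam lamt xlam xlamt hminlam i hslope hscreen
end
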